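/- Let n = p·q where p and q are distinct odd primes, and let ω = e^{2πi/n}. Suppose a_0, …, a_{n−1}, b_0, …, b_{n−1} ∈ {0,1} are such that for every 0 ≤ k ≤ n−1 there exists an integer c_k with Σ_{i=0}^{n−1} a_i ω^{i·k} = ω^{c_k} · Σ_{i=0}^{n−1} b_i ω^{i·k}. Then the sequences (a_i) and (b_i) are cyclic shifts of each other. -/

import Mathlib

/-!
Write `A = ∑ aᵢ Xⁱ` and `B = ∑ bᵢ Xⁱ` in `ℤ[X]`. It suffices to find one `j` with
`Φ_d ∣ A - X ^ j * B` for every `d ∣ pq`: then `A(ζ) = ζ ^ j * B(ζ)` at every `pq`-th root of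
unity `ζ`, and a sequence of length `pq` is determined by these values.

For `d = 1` this follows from `|A(1)| = |B(1)|`, as the `aᵢ`, `bᵢ` are nonnegative. For `d = q`,
the conjugation `ω ↦ ω ^ t` with `t ≡ 1 [MOD q]`, `t ≡ 2 [MOD p]` fixes `ω ^ p`, so the phase of
`A(ω ^ p) / B(ω ^ p)` is a power of `ω ^ p` (this needs `p` odd); likewise for `d = p`. If
`B(ω) = 0`, the condition for `d = pq` holds for every `j` and the Chinese remainder theorem
gives `j`. Otherwise the exponents for `pq` and for `q` agree mod `q`: if not, reducing mod `p`,
where `Φ_{pq} = Φ_q ^ (p - 1)`, gives `Φ_q ∣ B` over `𝔽_p`, so the column sums `∑_t b_{v + q t}`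
are all congruent mod `p`. They lie in `[0, p]` and are not all equal (as `B(ω ^ p) ≠ 0`), so
each column is constant, and then `B(ω) = 0`.
-/

/-- `primRoot n` is the primitive `n`-th root of unity `e^{2πi/n}`. -/
noncomputable def primRoot (n : ℕ) : ℂ :=
  Complex.exp (2 * Real.pi * Complex.I / n)

/-- `expSum n a k = Σ_{i=0}^{n-1} a_i ω^{i·k}` where `ω = e^{2πi/n}`. -/
noncomputable def expSum (n : ℕ) (a : ℕ → ℕ) (k : ℕ) : ℂ :=
  ∑ i ∈ Finset.range n, (a i : ℂ) * primRoot n ^ (i * k)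

open Polynomial Finset

theorem IsPrimitiveRoot.pow_eq_pow_iff_modEq {M : Type*} [CommMonoid M] {ζ : M} {n a b : ℕ}
    (h : IsPrimitiveRoot ζ n) (hn : n ≠ 0) : ζ ^ a = ζ ^ b ↔ a ≡ b [MOD n] := by
  rw [(h.isOfFinOrder hn).pow_eq_pow_iff_modEq, ← h.eq_orderOf]

theorem Nat.add_mul_lt_mul_of_lt {p q v t : ℕ} (hv : v < q) (ht : t < p) : v + q * t < p * q := by
  nlinarith

theorem Nat.eq_zero_or_eq_of_modEq_of_ne {p x y z : ℕ} (hx : x ≤ p) (hy : y ≤ p) (hz : z ≤ p)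
    (hxy : x ≡ y [MOD p]) (hne : x ≠ y) (hzy : z ≡ y [MOD p]) : z = 0 ∨ z = p := by
  have hmod : ∀ w ≤ p, (w < p ∧ w % p = w) ∨ (w = p ∧ w % p = 0) := fun w hw => by
    rcases hw.lt_or_eq with hw | rfl
    · exact Or.inl ⟨hw, Nat.mod_eq_of_lt hw⟩
    · exact Or.inr ⟨rfl, Nat.mod_self w⟩
  unfold Nat.ModEq at hxy hzy
  rcases hmod x hx with hx' | hx' <;> rcases hmod y hy with hy' | hy' <;>
    rcases hmod z hz with hz' | hz' <;> omega

theorem Finset.sum_range_mul_eq_sum_sum {M : Type*} [AddCommMonoid M] (f : ℕ → M) (p q : ℕ) :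
    ∑ x ∈ range (p * q), f x = ∑ v ∈ range q, ∑ t ∈ range p, f (v + q * t) := by
  rw [Finset.sum_comm]
  induction p with
  | zero => simp
  | succ p ih =>
    rw [Nat.succ_mul, Finset.sum_range_add, ih, Finset.sum_range_succ]
    simp only [add_comm, mul_comm]

theorem Finset.sum_range_comp_add_mod {M : Type*} [AddCommMonoid M] {n : ℕ} (hn : 0 < n)
    (g : ℕ → M) (j : ℕ) : ∑ i ∈ range n, g ((i + j) % n) = ∑ i ∈ range n, g i := by
  have : NeZero n := ⟨hn.ne'⟩
  have := Equiv.sum_comp (Equiv.addRight (⟨j % n, Nat.mod_lt j hn⟩ : Fin n)) (fun i => g i)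
  simpa [Fin.val_add, Fin.sum_univ_eq_sum_range (fun i => g ((i + j) % n)),
    Fin.sum_univ_eq_sum_range g] using this

namespace Polynomial

theorem cyclotomic_dvd_iff_aeval_eq_zero {d : ℕ} {η : ℂ} (hη : IsPrimitiveRoot η d) (hd : 0 < d)
    (f : ℤ[X]) : cyclotomic d ℤ ∣ f ↔ aeval η f = 0 := by
  rw [cyclotomic_eq_minpoly hη hd, minpoly.isIntegrallyClosed_dvd_iff (hη.isIntegral hd)]

theorem cyclotomic_dvd_sub_X_pow_mul_iff {d s : ℕ} {η : ℂ} (hη : IsPrimitiveRoot η d) (hd : 0 < d)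
    (A B : ℤ[X]) : cyclotomic d ℤ ∣ A - X ^ s * B ↔ aeval η A = η ^ s * aeval η B := by
  rw [cyclotomic_dvd_iff_aeval_eq_zero hη hd, map_sub, map_mul, map_pow, aeval_X, sub_eq_zero]

theorem cyclotomic_dvd_sub_X_pow_mul_of_modEq {d s t : ℕ} (hd : 0 < d) (hst : s ≡ t [MOD d])
    {A B : ℤ[X]} (h : cyclotomic d ℤ ∣ A - X ^ s * B) : cyclotomic d ℤ ∣ A - X ^ t * B := by
  have hη := Complex.isPrimitiveRoot_exp d hd.ne'
  rw [cyclotomic_dvd_sub_X_pow_mul_iff hη hd] at h ⊢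
  rwa [← (hη.pow_eq_pow_iff_modEq hd.ne').mpr hst]

theorem cyclotomic_dvd_comp_X_pow (R : Type*) [CommRing R] {q e : ℕ} (he : e.Coprime q) :
    cyclotomic q R ∣ (cyclotomic q R).comp (X ^ e) := by
  rcases q.eq_zero_or_pos with rfl | hq
  · simp
  have hζ := Complex.isPrimitiveRoot_exp q hq.ne'
  have hℤ : cyclotomic q ℤ ∣ (cyclotomic q ℤ).comp (X ^ e) := by
    rw [cyclotomic_dvd_iff_aeval_eq_zero hζ hq, aeval_comp, map_pow, aeval_X,
      ← cyclotomic_dvd_iff_aeval_eq_zero (hζ.pow_of_coprime e he) hq]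
  simpa [Polynomial.map_comp] using Polynomial.map_dvd (Int.castRingHom R) hℤ

variable {K : Type*} [Field K] {q : ℕ} [hq : Fact q.Prime]

theorem isCoprime_X_pow_sub_one_cyclotomic (hqK : (q : K) ≠ 0) {e : ℕ} (he : e.Coprime q) :
    IsCoprime (X ^ e - 1 : K[X]) (cyclotomic q K) := by
  have h1 : IsCoprime (X - C 1 : K[X]) (cyclotomic q K) := by
    rw [(irreducible_X_sub_C 1).coprime_iff_not_dvd, dvd_iff_isRoot, IsRoot.def]
    rwa [eval_one_cyclotomic_prime]
  have he' := h1.map (compRingHom (X ^ e))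
  simp only [coe_compRingHom_apply, sub_comp, X_comp, C_comp] at he'
  exact he'.of_isCoprime_of_dvd_right (cyclotomic_dvd_comp_X_pow K he)

theorem cyclotomic_dvd_of_dvd_X_pow_sub_X_pow_mul (hqK : (q : K) ≠ 0) {s m : ℕ}
    (hsm : ¬s ≡ m [MOD q]) {F : K[X]} (h : cyclotomic q K ∣ (X ^ s - X ^ m) * F) :
    cyclotomic q K ∣ F := by
  wlog hms : m ≤ s generalizing s m
  · exact this (fun h' => hsm h'.symm) (by rwa [← neg_sub, neg_mul, dvd_neg]) (le_of_not_ge hms)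
  have hcop : (s - m).Coprime q := Nat.Coprime.symm <| (hq.out.coprime_iff_not_dvd).mpr
    fun hdvd => hsm ((Nat.modEq_iff_dvd' hms).mpr hdvd).symm
  have hX : IsCoprime (X : K[X]) (cyclotomic q K) := by
    rw [irreducible_X.coprime_iff_not_dvd, X_dvd_iff, cyclotomic_coeff_zero K hq.out.one_lt]
    exact one_ne_zero
  rw [show (X ^ s - X ^ m : K[X]) = X ^ m * (X ^ (s - m) - 1) by
    rw [mul_sub, ← pow_add, Nat.add_sub_cancel' hms, mul_one], mul_assoc] at h
  exact (isCoprime_X_pow_sub_one_cyclotomic hqK hcop).symm.dvd_of_dvd_mul_left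
    (hX.pow_left.symm.dvd_of_dvd_mul_left h)

theorem eq_of_cyclotomic_dvd_sum {c : ℕ → K} (h : cyclotomic q K ∣ ∑ v ∈ range q, C (c v) * X ^ v)
    {v : ℕ} (hv : v < q) : c v = c 0 := by
  obtain ⟨F, hF⟩ := h
  have hcoeff : ∀ w < q, (∑ v ∈ range q, C (c v) * X ^ v).coeff w = c w := fun w hw => by
    simp [hw]
  have hF0 : F.natDegree = 0 := by
    rcases eq_or_ne F 0 with rfl | hFne
    · rfl
    have := (cyclotomic.monic q K).natDegree_mul' hFne
    rw [← hF, natDegree_cyclotomic, Nat.totient_prime hq.out] at this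
    have hle : (∑ v ∈ range q, C (c v) * X ^ v).natDegree ≤ q - 1 :=
      natDegree_sum_le_of_forall_le _ _ fun i hi =>
        (natDegree_C_mul_X_pow_le _ _).trans (Nat.le_sub_one_of_lt (mem_range.mp hi))
    omega
  rw [eq_C_of_natDegree_eq_zero hF0] at hF
  have hconst : ∀ w < q, c w = F.coeff 0 := fun w hw => by
    rw [← hcoeff w hw, hF, coeff_mul_C, cyclotomic_prime, finsetSum_coeff]
    simp [hw]
  rw [hconst v hv, hconst 0 hq.out.pos]

end Polynomial

noncomputable def seqPoly (n : ℕ) (a : ℕ → ℕ) : ℤ[X] :=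
  ∑ i ∈ range n, C (a i : ℤ) * X ^ i

theorem aeval_seqPoly (n : ℕ) (a : ℕ → ℕ) (z : ℂ) :
    aeval z (seqPoly n a) = ∑ i ∈ range n, (a i : ℂ) * z ^ i := by
  simp [seqPoly]

theorem expSum_eq_aeval_seqPoly (n : ℕ) (a : ℕ → ℕ) (k : ℕ) :
    expSum n a k = aeval (primRoot n ^ k) (seqPoly n a) := by
  simp only [expSum, aeval_seqPoly, ← pow_mul, mul_comm k]

theorem coeff_seqPoly (n : ℕ) (a : ℕ → ℕ) {i : ℕ} (hi : i < n) : (seqPoly n a).coeff i = a i := by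
  simp [seqPoly, hi]

theorem natDegree_seqPoly_lt {n : ℕ} (hn : 0 < n) (a : ℕ → ℕ) : (seqPoly n a).natDegree < n := by
  refine lt_of_le_of_lt (natDegree_sum_le_of_forall_le _ _ fun i hi => ?_) (Nat.sub_lt hn one_pos)
  exact (natDegree_C_mul_X_pow_le _ _).trans (Nat.le_sub_one_of_lt (mem_range.mp hi))

theorem aeval_seqPoly_eq_pow_mul_shift {n : ℕ} (hn : 0 < n) (a : ℕ → ℕ) (j : ℕ) {z : ℂ}
    (hz : z ^ n = 1) :
    aeval z (seqPoly n a) = z ^ j * aeval z (seqPoly n fun i => a ((i + j) % n)) := by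
  rw [aeval_seqPoly, aeval_seqPoly, Finset.mul_sum,
    ← Finset.sum_range_comp_add_mod hn (fun i => (a i : ℂ) * z ^ i) j]
  refine Finset.sum_congr rfl fun i _ => ?_
  rw [← pow_eq_pow_mod _ hz, pow_add]
  ring

theorem eq_of_forall_aeval_pow_seqPoly_eq {n : ℕ} {ω : ℂ} (hω : IsPrimitiveRoot ω n) (hn : 0 < n)
    {u v : ℕ → ℕ} (h : ∀ k < n, aeval (ω ^ k) (seqPoly n u) = aeval (ω ^ k) (seqPoly n v))
    {i : ℕ} (hi : i < n) : u i = v i := by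
  have hmap : (seqPoly n u - seqPoly n v).map (algebraMap ℤ ℂ) = 0 := by
    refine eq_zero_of_natDegree_lt_card_of_eval_eq_zero _ (f := fun k : Fin n => ω ^ (k : ℕ))
      (fun k l hkl => Fin.ext (hω.pow_inj k.2 l.2 hkl)) (fun k => ?_) ?_
    · rw [eval_map_algebraMap, map_sub, h k k.2, sub_self]
    · rw [Fintype.card_fin]
      exact natDegree_map_le.trans_lt ((natDegree_sub_le _ _).trans_lt
        (max_lt (natDegree_seqPoly_lt hn u) (natDegree_seqPoly_lt hn v)))
  rw [Polynomial.map_eq_zero_iff (RingHom.injective_int _), sub_eq_zero] at hmap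
  have := congrArg (coeff · i) hmap
  simpa [coeff_seqPoly n _ hi] using this

theorem dvd_of_aeval_pow_eq_pow_mul {p q c : ℕ} (hp : p.Prime) (hp2 : p ≠ 2) (hpq : p.Coprime q)
    {ω : ℂ} (hω : IsPrimitiveRoot ω (p * q)) {f g : ℤ[X]} (hg : aeval (ω ^ p) g ≠ 0)
    (h : aeval (ω ^ p) f = ω ^ c * aeval (ω ^ p) g) : p ∣ c := by
  have hn : 0 < p * q := Nat.mul_pos hp.pos <| Nat.pos_of_ne_zero <| by
    rintro rfl; exact hp.ne_one ((Nat.coprime_zero_right p).mp hpq)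
  obtain ⟨t, ht2, ht1⟩ := Nat.chineseRemainder hpq 2 1
  have htp : t.Coprime p := by
    rw [Nat.Coprime, ht2.gcd_eq]; exact (Nat.coprime_primes Nat.prime_two hp).mpr hp2.symm
  have htq : t.Coprime q := by rw [Nat.Coprime, ht1.gcd_eq, Nat.gcd_one_left]
  -- `ω ↦ ω ^ t` is a Galois conjugation fixing `ω ^ p`, so it must also fix the phase `ω ^ c`.
  have hσ : aeval (ω ^ t) (f.comp (X ^ p) - X ^ c * g.comp (X ^ p)) = 0 := by
    rw [← cyclotomic_dvd_iff_aeval_eq_zero (hω.pow_of_coprime t (htp.mul_right htq)) hn,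
      cyclotomic_dvd_iff_aeval_eq_zero hω hn]
    simp [aeval_comp, h]
  have hfix : (ω ^ t) ^ p = ω ^ p := by
    rw [← pow_mul, hω.pow_eq_pow_iff_modEq hn.ne', mul_comm t]
    simpa using ht1.mul_left' p
  simp only [map_sub, map_mul, map_pow, aeval_comp, aeval_X, hfix, h, sub_eq_zero] at hσ
  have htc : t * c ≡ c [MOD p * q] := by
    rw [← hω.pow_eq_pow_iff_modEq hn.ne', pow_mul]
    exact (mul_right_cancel₀ hg hσ).symm
  have h2c : c + c ≡ c + 0 [MOD p] := by
    simpa [two_mul] using ((ht2.mul_right c).symm.trans (Nat.ModEq.of_mul_right q htc))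
  exact Nat.modEq_zero_iff_dvd.mp (Nat.ModEq.add_left_cancel' c h2c)

theorem exists_cyclotomic_dvd_sub_X_pow_mul {p q c : ℕ} (hp : p.Prime) (hp2 : p ≠ 2)
    (hpq : p.Coprime q) {ω : ℂ} (hω : IsPrimitiveRoot ω (p * q)) {A B : ℤ[X]}
    (h : aeval (ω ^ p) A = ω ^ c * aeval (ω ^ p) B) : ∃ s, cyclotomic q ℤ ∣ A - X ^ s * B := by
  have hq : 0 < q := Nat.pos_of_ne_zero <| by
    rintro rfl; exact hp.ne_one ((Nat.coprime_zero_right p).mp hpq)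
  have hζ : IsPrimitiveRoot (ω ^ p) q := hω.pow (Nat.mul_pos hp.pos hq) rfl
  by_cases hB : aeval (ω ^ p) B = 0
  · exact ⟨0, (cyclotomic_dvd_sub_X_pow_mul_iff hζ hq A B).mpr (by simp [h, hB])⟩
  · obtain ⟨s, rfl⟩ := dvd_of_aeval_pow_eq_pow_mul hp hp2 hpq hω hB h
    exact ⟨s, (cyclotomic_dvd_sub_X_pow_mul_iff hζ hq A B).mpr (by rw [h, pow_mul])⟩

def columnSum (p q : ℕ) (b : ℕ → ℕ) (v : ℕ) : ℕ :=
  ∑ t ∈ range p, b (v + q * t)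

theorem columnSum_le {p q : ℕ} {b : ℕ → ℕ} (hb : ∀ i < p * q, b i ≤ 1) {v : ℕ} (hv : v < q) :
    columnSum p q b v ≤ p := by
  simpa [columnSum] using Finset.sum_le_card_nsmul (range p) _ 1 fun t ht =>
    hb _ (Nat.add_mul_lt_mul_of_lt hv (mem_range.mp ht))

theorem X_pow_sub_one_dvd_seqPoly_sub (p q : ℕ) (b : ℕ → ℕ) :
    (X ^ q - 1 : ℤ[X]) ∣ seqPoly (p * q) b - ∑ v ∈ range q, C (columnSum p q b v : ℤ) * X ^ v := by
  simp only [seqPoly, Finset.sum_range_mul_eq_sum_sum, columnSum, Nat.cast_sum, map_sum,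
    Finset.sum_mul, ← Finset.sum_sub_distrib]
  refine Finset.dvd_sum fun v _ => Finset.dvd_sum fun t _ => ?_
  rw [pow_add, pow_mul, ← mul_assoc, ← mul_sub_one, mul_comm _ ((X ^ q) ^ t - 1)]
  exact dvd_mul_of_dvd_left (by simpa using sub_dvd_pow_sub_pow (X ^ q : ℤ[X]) 1 t) _

theorem aeval_seqPoly_of_pow_eq_one (p q : ℕ) (b : ℕ → ℕ) {z : ℂ} (hz : z ^ q = 1) :
    aeval z (seqPoly (p * q) b) = ∑ v ∈ range q, (columnSum p q b v : ℂ) * z ^ v := by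
  obtain ⟨F, hF⟩ := X_pow_sub_one_dvd_seqPoly_sub p q b
  have := congrArg (aeval z) hF
  simp only [map_sub, map_mul, map_pow, aeval_X, map_one, hz, sub_self, zero_mul, sub_eq_zero]
    at this
  simpa using this

theorem aeval_seqPoly_eq_zero_of_columnSum {p q : ℕ} (hp : 1 < p) {ω : ℂ}
    (hω : IsPrimitiveRoot ω (p * q)) {b : ℕ → ℕ} (hb : ∀ i < p * q, b i ≤ 1)
    (hcol : ∀ v < q, columnSum p q b v = 0 ∨ columnSum p q b v = p) :
    aeval ω (seqPoly (p * q) b) = 0 := by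
  rcases q.eq_zero_or_pos with rfl | hq
  · simp [seqPoly]
  have hζ : IsPrimitiveRoot (ω ^ q) p := hω.pow (by positivity) (mul_comm p q)
  rw [aeval_seqPoly, Finset.sum_range_mul_eq_sum_sum]
  refine Finset.sum_eq_zero fun v hv => ?_
  rcases hcol v (mem_range.mp hv) with h0 | hfull
  · exact Finset.sum_eq_zero fun t ht => by simp [Finset.sum_eq_zero_iff.mp h0 t ht]
  · have h1 : ∀ t ∈ range p, b (v + q * t) = 1 :=
      (Finset.sum_eq_sum_iff_of_le fun t ht =>
        hb _ (Nat.add_mul_lt_mul_of_lt (mem_range.mp hv) (mem_range.mp ht))).mp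
        (by simpa [columnSum] using hfull)
    calc ∑ t ∈ range p, (b (v + q * t) : ℂ) * ω ^ (v + q * t)
        = ω ^ v * ∑ t ∈ range p, (ω ^ q) ^ t := by
          rw [Finset.mul_sum]
          refine Finset.sum_congr rfl fun t ht => ?_
          rw [h1 t ht, pow_add, pow_mul, Nat.cast_one, one_mul]
      _ = 0 := by rw [hζ.geom_sum_eq_zero hp, mul_zero]

theorem aeval_seqPoly_eq_zero_of_cyclotomic_dvd_map {p q : ℕ} [hp : Fact p.Prime]
    [hq : Fact q.Prime] {ω : ℂ} (hω : IsPrimitiveRoot ω (p * q)) {b : ℕ → ℕ}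
    (hb : ∀ i < p * q, b i ≤ 1)
    (hdvd : cyclotomic q (ZMod p) ∣ (seqPoly (p * q) b).map (Int.castRingHom (ZMod p)))
    (hB : aeval (ω ^ p) (seqPoly (p * q) b) ≠ 0) : aeval ω (seqPoly (p * q) b) = 0 := by
  have hζ : IsPrimitiveRoot (ω ^ p) q := hω.pow (Nat.mul_pos hp.out.pos hq.out.pos) rfl
  have hcong : ∀ v < q, columnSum p q b v ≡ columnSum p q b 0 [MOD p] := fun v hv => by
    rw [← ZMod.natCast_eq_natCast_iff]
    refine eq_of_cyclotomic_dvd_sum (c := fun v => (columnSum p q b v : ZMod p)) ?_ hv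
    have hfold : (X ^ q - 1 : (ZMod p)[X]) ∣ (seqPoly (p * q) b).map (Int.castRingHom (ZMod p)) -
        ∑ v ∈ range q, C (columnSum p q b v : ZMod p) * X ^ v := by
      simpa [Polynomial.map_sum] using
        Polynomial.map_dvd (Int.castRingHom (ZMod p)) (X_pow_sub_one_dvd_seqPoly_sub p q b)
    have := dvd_sub hdvd ((cyclotomic.dvd_X_pow_sub_one q (ZMod p)).trans hfold)
    rwa [sub_sub_cancel] at this
  obtain ⟨v₀, hv₀, hne⟩ : ∃ v < q, columnSum p q b v ≠ columnSum p q b 0 := by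
    by_contra! hconst
    apply hB
    rw [aeval_seqPoly_of_pow_eq_one p q b hζ.pow_eq_one,
      Finset.sum_congr rfl fun v hv => by rw [hconst v (mem_range.mp hv)], ← Finset.mul_sum,
      hζ.geom_sum_eq_zero hq.out.one_lt, mul_zero]
  refine aeval_seqPoly_eq_zero_of_columnSum hp.out.one_lt hω hb fun v hv => ?_
  exact Nat.eq_zero_or_eq_of_modEq_of_ne (columnSum_le hb hv₀) (columnSum_le hb hq.out.pos)
    (columnSum_le hb hv) (hcong v₀ hv₀) hne (hcong v hv)

theorem cyclotomic_dvd_map_of_not_modEq {p q m s : ℕ} [hp : Fact p.Prime] [Fact q.Prime]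
    (hpq : ¬p ∣ q) {A B : ℤ[X]} (hm : cyclotomic (p * q) ℤ ∣ A - X ^ m * B)
    (hs : cyclotomic q ℤ ∣ A - X ^ s * B) (hsm : ¬s ≡ m [MOD q]) :
    cyclotomic q (ZMod p) ∣ B.map (Int.castRingHom (ZMod p)) := by
  have hΦ : cyclotomic q (ZMod p) ∣ cyclotomic (p * q) (ZMod p) := by
    rw [mul_comm, cyclotomic_mul_prime_eq_pow_of_not_dvd _ hpq]
    exact dvd_pow_self _ (Nat.sub_ne_zero_of_lt hp.out.one_lt)
  have hm' := hΦ.trans (by simpa using Polynomial.map_dvd (Int.castRingHom (ZMod p)) hm)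
  have hs' := by simpa using Polynomial.map_dvd (Int.castRingHom (ZMod p)) hs
  refine cyclotomic_dvd_of_dvd_X_pow_sub_X_pow_mul (by rwa [Ne, ZMod.natCast_eq_zero_iff]) hsm ?_
  convert dvd_sub hm' hs' using 1
  ring

theorem cyclotomic_dvd_sub_X_pow_mul_of_cyclotomic_mul_dvd {p q n m s : ℕ} (hp : p.Prime)
    (hq : q.Prime) (hne : p ≠ q) (hn : n = p * q) {ω : ℂ} (hω : IsPrimitiveRoot ω n) {A : ℤ[X]}
    {b : ℕ → ℕ} (hb : ∀ i < n, b i ≤ 1) (hB : aeval ω (seqPoly n b) ≠ 0)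
    (hm : cyclotomic n ℤ ∣ A - X ^ m * seqPoly n b)
    (hs : cyclotomic q ℤ ∣ A - X ^ s * seqPoly n b) :
    cyclotomic q ℤ ∣ A - X ^ m * seqPoly n b := by
  subst hn
  have : Fact p.Prime := ⟨hp⟩
  have : Fact q.Prime := ⟨hq⟩
  have hζ : IsPrimitiveRoot (ω ^ p) q := hω.pow (Nat.mul_pos hp.pos hq.pos) rfl
  by_cases hBζ : aeval (ω ^ p) (seqPoly (p * q) b) = 0
  · rw [cyclotomic_dvd_sub_X_pow_mul_iff hζ hq.pos] at hs ⊢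
    rw [hs, hBζ, mul_zero, mul_zero]
  by_cases hsm : s ≡ m [MOD q]
  · exact cyclotomic_dvd_sub_X_pow_mul_of_modEq hq.pos hsm hs
  have hpq : ¬p ∣ q := fun h => hne ((Nat.prime_dvd_prime_iff_eq hp hq).mp h)
  exact absurd (aeval_seqPoly_eq_zero_of_cyclotomic_dvd_map hω hb
    (cyclotomic_dvd_map_of_not_modEq hpq hm hs hsm) hBζ) hB

theorem exists_common_exponent {p q n : ℕ} (hp : p.Prime) (hq : q.Prime) (hop : Odd p)
    (hoq : Odd q) (hne : p ≠ q) (hn : n = p * q) {ω : ℂ} (hω : IsPrimitiveRoot ω n) {A : ℤ[X]}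
    {b : ℕ → ℕ} (hb : ∀ i < n, b i ≤ 1)
    (h : ∀ k < n, ∃ c : ℕ, aeval (ω ^ k) A = ω ^ c * aeval (ω ^ k) (seqPoly n b)) :
    ∃ j, cyclotomic p ℤ ∣ A - X ^ j * seqPoly n b ∧ cyclotomic q ℤ ∣ A - X ^ j * seqPoly n b ∧
      cyclotomic n ℤ ∣ A - X ^ j * seqPoly n b := by
  have hn0 : 0 < n := hn ▸ Nat.mul_pos hp.pos hq.pos
  have hcop : p.Coprime q := (Nat.coprime_primes hp hq).mpr hne
  have hωpq : IsPrimitiveRoot ω (p * q) := hn ▸ hω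
  have hωqp : IsPrimitiveRoot ω (q * p) := mul_comm p q ▸ hωpq
  obtain ⟨s, hs⟩ : ∃ s, cyclotomic q ℤ ∣ A - X ^ s * seqPoly n b := by
    obtain ⟨c, hc⟩ := h p (hn ▸ lt_mul_right hp.pos hq.one_lt)
    exact exists_cyclotomic_dvd_sub_X_pow_mul hp (hop.ne_two_of_dvd_nat dvd_rfl) hcop hωpq hc
  obtain ⟨r, hr⟩ : ∃ r, cyclotomic p ℤ ∣ A - X ^ r * seqPoly n b := by
    obtain ⟨c, hc⟩ := h q (hn ▸ lt_mul_left hq.pos hp.one_lt)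
    exact exists_cyclotomic_dvd_sub_X_pow_mul hq (hoq.ne_two_of_dvd_nat dvd_rfl) hcop.symm hωqp hc
  obtain ⟨m, hm⟩ : ∃ m, cyclotomic n ℤ ∣ A - X ^ m * seqPoly n b := by
    obtain ⟨c, hc⟩ := h 1 (hn ▸ Nat.one_lt_mul_iff.mpr ⟨hp.pos, hq.pos, Or.inl hp.one_lt⟩)
    exact ⟨c, (cyclotomic_dvd_sub_X_pow_mul_iff hω hn0 _ _).mpr (by simpa using hc)⟩
  by_cases hB : aeval ω (seqPoly n b) = 0
  · obtain ⟨j, hjp, hjq⟩ := Nat.chineseRemainder hcop r s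
    refine ⟨j, cyclotomic_dvd_sub_X_pow_mul_of_modEq hp.pos hjp.symm hr,
      cyclotomic_dvd_sub_X_pow_mul_of_modEq hq.pos hjq.symm hs, ?_⟩
    rw [cyclotomic_dvd_sub_X_pow_mul_iff hω hn0, hB] at hm ⊢
    simpa using hm
  · exact ⟨m, cyclotomic_dvd_sub_X_pow_mul_of_cyclotomic_mul_dvd hq hp hne.symm
      (hn.trans (mul_comm p q)) hω hb hB hm hr,
      cyclotomic_dvd_sub_X_pow_mul_of_cyclotomic_mul_dvd hp hq hne hn hω hb hB hm hs, hm⟩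

theorem cyclotomic_one_dvd_sub_X_pow_mul {n c : ℕ} {ω : ℂ} (hω : IsPrimitiveRoot ω n) (hn : 0 < n)
    {a b : ℕ → ℕ} (h : aeval 1 (seqPoly n a) = ω ^ c * aeval 1 (seqPoly n b)) (j : ℕ) :
    cyclotomic 1 ℤ ∣ seqPoly n a - X ^ j * seqPoly n b := by
  have hsum : ∀ u, aeval (1 : ℂ) (seqPoly n u) = ((∑ i ∈ range n, u i : ℕ) : ℂ) := by
    simp [aeval_seqPoly]
  rw [cyclotomic_dvd_sub_X_pow_mul_iff IsPrimitiveRoot.one one_pos, one_pow, one_mul]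
  rw [hsum, hsum] at h ⊢
  have := congrArg norm h
  rw [norm_mul, norm_pow, hω.norm'_eq_one hn.ne', one_pow, one_mul, Complex.norm_natCast,
    Complex.norm_natCast] at this
  exact_mod_cast this

theorem aeval_eq_zero_of_cyclotomic_dvd {p q n : ℕ} (hp : p.Prime) (hq : q.Prime) (hn : n = p * q)
    {F : ℤ[X]} (h1 : cyclotomic 1 ℤ ∣ F) (hpF : cyclotomic p ℤ ∣ F) (hqF : cyclotomic q ℤ ∣ F)
    (hnF : cyclotomic n ℤ ∣ F) {z : ℂ} (hz : z ^ n = 1) : aeval z F = 0 := by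
  have hd : orderOf z ∣ p * q := hn ▸ orderOf_dvd_of_pow_eq_one hz
  rw [← cyclotomic_dvd_iff_aeval_eq_zero (IsPrimitiveRoot.orderOf z)
    (Nat.pos_of_dvd_of_pos hd (Nat.mul_pos hp.pos hq.pos))]
  obtain ⟨d₁, d₂, h₁, h₂, hd'⟩ := Nat.dvd_mul.mp hd
  rw [← hd']
  rcases (Nat.dvd_prime hp).mp h₁ with rfl | rfl <;> rcases (Nat.dvd_prime hq).mp h₂ with rfl | rfl
  · simpa using h1
  · simpa using hqF
  · simpa using hpF
  · simpa [hn] using hnF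

theorem stmt_3_general (p q n : ℕ) (hp : p.Prime) (hq : q.Prime)
    (hop : Odd p) (hoq : Odd q) (hne : p ≠ q) (hn : n = p * q)
    (a b : ℕ → ℕ)
    (hb : ∀ i < n, b i = 0 ∨ b i = 1)
    (h : ∀ k < n, ∃ c : ℤ, expSum n a k = primRoot n ^ c * expSum n b k) :
    ∃ j : ℕ, ∀ i < n, b i = a ((i + j) % n) := by
  have hn0 : 0 < n := hn ▸ Nat.mul_pos hp.pos hq.pos
  have : NeZero n := ⟨hn0.ne'⟩
  have hω : IsPrimitiveRoot (primRoot n) n := Complex.isPrimitiveRoot_exp n hn0.ne'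
  have h' : ∀ k < n, ∃ c : ℕ, aeval (primRoot n ^ k) (seqPoly n a) =
      primRoot n ^ c * aeval (primRoot n ^ k) (seqPoly n b) := fun k hk => by
    obtain ⟨c, hc⟩ := h k hk
    obtain ⟨t, -, ht⟩ := hω.eq_pow_of_pow_eq_one (ξ := primRoot n ^ c) (by
      rw [← zpow_natCast, ← zpow_mul, mul_comm, zpow_mul, zpow_natCast, hω.pow_eq_one, one_zpow])
    exact ⟨t, by rw [ht, ← expSum_eq_aeval_seqPoly, ← expSum_eq_aeval_seqPoly, hc]⟩
  have hb' : ∀ i < n, b i ≤ 1 := fun i hi => by rcases hb i hi with h | h <;> omega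
  obtain ⟨j, hjp, hjq, hjn⟩ := exists_common_exponent hp hq hop hoq hne hn hω hb' h'
  obtain ⟨c₀, hc₀⟩ := h' 0 hn0
  have hj1 := cyclotomic_one_dvd_sub_X_pow_mul hω hn0 (by simpa using hc₀) j
  refine ⟨j, fun i hi => eq_of_forall_aeval_pow_seqPoly_eq (v := fun i => a ((i + j) % n)) hω hn0
    (fun k _ => ?_) hi⟩
  have hz : (primRoot n ^ k) ^ n = 1 := by rw [← pow_mul, mul_comm, pow_mul, hω.pow_eq_one, one_pow]
  have := aeval_eq_zero_of_cyclotomic_dvd hp hq hn hj1 hjp hjq hjn hz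
  rw [map_sub, map_mul, map_pow, aeval_X, sub_eq_zero,
    aeval_seqPoly_eq_pow_mul_shift hn0 a j hz] at this
  exact (mul_left_cancel₀ (pow_ne_zero _ (pow_ne_zero _ (hω.ne_zero hn0.ne'))) this).symm

theorem stmt_3 (p q n : ℕ) (hp : p.Prime) (hq : q.Prime)
    (hop : Odd p) (hoq : Odd q) (hne : p ≠ q) (hn : n = p * q)
    (a b : ℕ → ℕ)
    (ha : ∀ i < n, a i = 0 ∨ a i = 1) (hb : ∀ i < n, b i = 0 ∨ b i = 1)
    (h : ∀ k < n, ∃ c : ℤ, expSum n a k = primRoot n ^ c * expSum n b k) :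
    ∃ j : ℕ, ∀ i < n, b i = a ((i + j) % n) :=
  stmt_3_general p q n hp hq hop hoq hne hn a b hb h
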